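/- Let q be a prime power, n ≥ 2, and φ ∈ GL_n(𝔽_q) not a scalar multiple of the identity. Then the number of lines through the origin ℓ ⊆ 𝔽_q^n with ℓ ∩ H₀ = {0} that are fixed by φ (i.e., φ(ℓ) = ℓ) is at most q^{n-2} + 1. -/

import Mathlib

/-!
A line fixed by `f` and meeting `ker h` only in `0` is spanned by a unique eigenvector `v` with
`h v = 1`. For each eigenvalue `μ` whose eigenspace `E_μ` is not contained in `ker h`, these
vectors form an affine hyperplane of `E_μ`, so there are `q ^ (dim E_μ - 1)` of them. Since `f`
is not scalar, every `dim E_μ ≤ dim V - 1`, while `∑ dim E_μ ≤ dim V`; under these constraints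
`∑ q ^ (dim E_μ - 1)` is at most `q ^ (dim V - 2) + 1`, because `q ^ a + q ^ b ≤ q ^ (a + b) + 1`.
-/

open Module Finset Submodule

theorem Nat.pow_add_pow_le_pow_add_add_one {q : ℕ} (hq : 1 ≤ q) (a b : ℕ) :
    q ^ a + q ^ b ≤ q ^ (a + b) + 1 := by
  have ha : 1 ≤ q ^ a := Nat.one_le_pow _ _ hq
  have hb : 1 ≤ q ^ b := Nat.one_le_pow _ _ hq
  rw [pow_add]
  nlinarith

theorem Nat.pow_sub_add_le {q : ℕ} (hq : 2 ≤ q) {j m : ℕ} (hjm : j ≤ m) :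
    q ^ (m - j) + j ≤ q ^ m := by
  have hj : j + 1 ≤ q ^ j := Nat.lt_pow_self hq
  calc q ^ (m - j) + j ≤ q ^ (m - j) * (j + 1) := by nlinarith [Nat.one_le_pow (m - j) q (by omega)]
    _ ≤ q ^ (m - j) * q ^ j := Nat.mul_le_mul_left _ hj
    _ = q ^ m := by rw [← pow_add, Nat.sub_add_cancel hjm]

theorem Finset.sum_pow_add_one_le {α : Type*} {q : ℕ} (hq : 1 ≤ q) (s : Finset α) (e : α → ℕ) :
    ∑ i ∈ s, q ^ e i + 1 ≤ q ^ (∑ i ∈ s, e i) + #s := by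
  classical
  induction s using Finset.induction_on with
  | empty => simp
  | insert a s ha ih =>
    rw [sum_insert ha, sum_insert ha, card_insert_of_notMem ha]
    have := Nat.pow_add_pow_le_pow_add_add_one hq (e a) (∑ i ∈ s, e i)
    omega

theorem Finset.sum_pow_pred_le {α : Type*} {q N : ℕ} (hq : 2 ≤ q) {s : Finset α} {d : α → ℕ}
    (hpos : ∀ i ∈ s, 1 ≤ d i) (hlt : ∀ i ∈ s, d i < N) (hsum : ∑ i ∈ s, d i ≤ N) :
    ∑ i ∈ s, q ^ (d i - 1) ≤ q ^ (N - 2) + 1 := by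
  rcases lt_or_ge #s 2 with hs | hs
  · have hterm : ∀ i ∈ s, q ^ (d i - 1) ≤ q ^ (N - 2) := fun i hi =>
      Nat.pow_le_pow_right (by omega) (by have := hlt i hi; omega)
    calc ∑ i ∈ s, q ^ (d i - 1) ≤ #s • q ^ (N - 2) := sum_le_card_nsmul _ _ _ hterm
      _ ≤ q ^ (N - 2) + 1 := by interval_cases h : #s <;> simp
  · have hpred : ∑ i ∈ s, (d i - 1) + #s = ∑ i ∈ s, d i := by
      rw [card_eq_sum_ones, ← sum_add_distrib]
      exact sum_congr rfl fun i hi => Nat.sub_add_cancel (hpos i hi)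
    have hexp : q ^ (∑ i ∈ s, (d i - 1)) ≤ q ^ (N - 2 - (#s - 2)) :=
      Nat.pow_le_pow_right (by omega) (by omega)
    have := sum_pow_add_one_le (q := q) (by omega) s (fun i => d i - 1)
    have := Nat.pow_sub_add_le hq (j := #s - 2) (m := N - 2) (by omega)
    omega

section

variable {F V : Type*} [Field F] [AddCommGroup V] [Module F V]

theorem Module.Dual.card_apply_eq_one [Fintype F] [FiniteDimensional F V] {g : Module.Dual F V}
    (hg : g ≠ 0) : Nat.card {v : V // g v = 1} = Fintype.card F ^ (finrank F V - 1) := by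
  obtain ⟨v₀, hv₀⟩ := LinearMap.surjective hg 1
  have e : {v : V // g v = 1} ≃ LinearMap.ker g :=
    (Equiv.addRight (-v₀)).subtypeEquiv fun v => by simp [hv₀, add_neg_eq_zero]
  rw [Nat.card_congr e, natCard_eq_pow_finrank (K := F), Nat.card_eq_fintype_card,
    ← Module.Dual.finrank_ker_add_one_of_ne_zero hg, Nat.add_sub_cancel]

theorem Submodule.card_apply_eq_one_of_le_ker {W : Submodule F V} {h : Module.Dual F V}
    (hW : W ≤ LinearMap.ker h) : Nat.card {w : W // h w = 1} = 0 := by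
  rw [Nat.card_eq_zero]
  exact .inl ⟨fun ⟨w, hw⟩ => by simp [LinearMap.mem_ker.mp (hW w.2)] at hw⟩

theorem Submodule.card_apply_eq_one_of_not_le_ker [Fintype F] [FiniteDimensional F V]
    {W : Submodule F V} {h : Module.Dual F V} (hW : ¬ W ≤ LinearMap.ker h) :
    Nat.card {w : W // h w = 1} = Fintype.card F ^ (finrank F W - 1) := by
  have hne : h.domRestrict W ≠ 0 := fun h0 =>
    hW fun w hw => by simpa using LinearMap.congr_fun h0 ⟨w, hw⟩
  exact Module.Dual.card_apply_eq_one hne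

theorem Submodule.exists_apply_eq_one_and_eq_span [FiniteDimensional F V] {ℓ : Submodule F V}
    {h : Module.Dual F V} (hℓ : finrank F ℓ = 1)
    (hH : (ℓ : Set V) ∩ {x | h x = 0} = {0}) : ∃ v, h v = 1 ∧ ℓ = span F {v} := by
  have hbot : ℓ ≠ ⊥ := by
    rintro rfl
    simp at hℓ
  obtain ⟨v, hv, hv0⟩ := exists_mem_ne_zero_of_ne_bot hbot
  have hhv : h v ≠ 0 := fun h0 => hv0 (by simpa using hH.subset ⟨hv, h0⟩)
  refine ⟨(h v)⁻¹ • v, by simp [hhv], ?_⟩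
  rw [span_singleton_smul_eq (inv_ne_zero hhv).isUnit]
  exact (eq_of_le_of_finrank_eq (span_singleton_le_iff_mem v ℓ |>.mpr hv)
    (by rw [hℓ, finrank_span_singleton hv0])).symm

theorem Module.End.exists_mem_eigenspace_of_map_span_le {f : Module.End F V} {v : V}
    (hf : (span F {v}).map f ≤ span F {v}) : ∃ μ, v ∈ f.eigenspace μ := by
  obtain ⟨μ, hμ⟩ := mem_span_singleton.mp (hf (mem_map_of_mem (mem_span_singleton_self v)))
  exact ⟨μ, mem_eigenspace_iff.mpr hμ.symm⟩

theorem iSupIndep.sum_finrank_le {ι : Type*} [Fintype ι] [FiniteDimensional F V]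
    {p : ι → Submodule F V} (hp : iSupIndep p) : ∑ i, finrank F (p i) ≤ finrank F V := by
  classical
  rw [← finrank_directSum]
  exact LinearMap.finrank_le_finrank_of_injective hp.dfinsupp_lsum_injective

theorem Module.End.finrank_eigenspace_lt [FiniteDimensional F V] {f : Module.End F V}
    (hf : ¬ ∃ μ : F, ∀ x, f x = μ • x) (μ : F) : finrank F (f.eigenspace μ) < finrank F V :=
  Submodule.finrank_lt fun htop =>
    hf ⟨μ, fun x => mem_eigenspace_iff.mp (htop ▸ Submodule.mem_top (x := x))⟩

def Module.End.fixedLinesOffKer (f : Module.End F V) (h : Module.Dual F V) :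
    Set (Submodule F V) :=
  {ℓ | finrank F ℓ = 1 ∧ (ℓ : Set V) ∩ {x | h x = 0} = {0} ∧ ℓ.map f = ℓ}

theorem Module.End.card_fixedLinesOffKer_le_card_sigma [Finite F] [FiniteDimensional F V]
    (f : Module.End F V) (h : Module.Dual F V) :
    Nat.card (f.fixedLinesOffKer h) ≤ Nat.card (Σ μ : F, {w : f.eigenspace μ // h w = 1}) := by
  have : Finite V := Module.finite_of_finite F
  choose v hv1 hspan using fun ℓ : f.fixedLinesOffKer h =>
    Submodule.exists_apply_eq_one_and_eq_span ℓ.2.1 ℓ.2.2.1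
  choose μ hμ using fun ℓ : f.fixedLinesOffKer h =>
    exists_mem_eigenspace_of_map_span_le (by rw [← hspan ℓ]; exact ℓ.2.2.2.le)
  refine Nat.card_le_card_of_injective (fun ℓ => ⟨μ ℓ, ⟨v ℓ, hμ ℓ⟩, hv1 ℓ⟩)
    fun a b hab => Subtype.ext ?_
  rw [hspan a, hspan b]
  exact congrArg (fun x => span F {((x.2 : f.eigenspace x.1) : V)}) hab

theorem Module.End.card_fixedLinesOffKer_le [Fintype F] [FiniteDimensional F V]
    {f : Module.End F V} (h : Module.Dual F V) (hf : ¬ ∃ μ : F, ∀ x, f x = μ • x) :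
    Nat.card (f.fixedLinesOffKer h) ≤ Fintype.card F ^ (finrank F V - 2) + 1 := by
  classical
  have : Finite V := Module.finite_of_finite F
  calc Nat.card (f.fixedLinesOffKer h)
      ≤ Nat.card (Σ μ : F, {w : f.eigenspace μ // h w = 1}) :=
        f.card_fixedLinesOffKer_le_card_sigma h
    _ = ∑ μ, Nat.card {w : f.eigenspace μ // h w = 1} := Nat.card_sigma
    _ = ∑ μ ∈ {μ | ¬ f.eigenspace μ ≤ LinearMap.ker h},
          Fintype.card F ^ (finrank F (f.eigenspace μ) - 1) := by
        rw [← sum_filter_not_add_sum_filter univ (fun μ => f.eigenspace μ ≤ LinearMap.ker h),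
          sum_eq_zero fun μ hμ => card_apply_eq_one_of_le_ker (mem_filter.mp hμ).2, add_zero]
        exact sum_congr rfl fun μ hμ => card_apply_eq_one_of_not_le_ker (mem_filter.mp hμ).2
    _ ≤ Fintype.card F ^ (finrank F V - 2) + 1 :=
        sum_pow_pred_le Fintype.one_lt_card
          (fun μ hμ => one_le_finrank_iff.mpr fun hbot => (mem_filter.mp hμ).2 (hbot ▸ bot_le))
          (fun μ _ => finrank_eigenspace_lt hf μ)
          ((sum_le_sum_of_subset (filter_subset _ _)).trans
            (eigenspaces_iSupIndep f).sum_finrank_le)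

end

/-- a non-scalar `φ ∈ GL_n(𝔽_q)` fixes at most `q^(n-2) + 1` of the lines
through the origin that meet `H₀` only in `0`. -/
theorem stmt14 (F : Type*) [Field F] [Fintype F] (n : ℕ) (hn : 2 ≤ n)
    (φ : (Fin n → F) ≃ₗ[F] (Fin n → F))
    (hφ : ¬ ∃ lam : F, ∀ x, φ x = lam • x) :
    Nat.card {ℓ : Submodule F (Fin n → F) //
      Module.finrank F ℓ = 1 ∧
      (ℓ : Set (Fin n → F)) ∩ {x | x ⟨n - 1, by omega⟩ = 0} = {0} ∧
      ℓ.map (φ : (Fin n → F) →ₗ[F] (Fin n → F)) = ℓ} ≤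
    Fintype.card F ^ (n - 2) + 1 := by
  have := Module.End.card_fixedLinesOffKer_le (f := φ.toLinearMap)
    (LinearMap.proj ⟨n - 1, by omega⟩) hφ
  rwa [Module.finrank_fin_fun] at this
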